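/- One-step incremental contraction (intermediate claim in the proof of Theorem 2): fix λ̌ ≥ 1 and set σ̌_z = σ(‖[W_z λ̌U_z b_z]‖_∞), σ̌_f = σ(‖[W_f λ̌U_f b_f]‖_∞), φ̌_r = tanh(‖[W_r λ̌U_r b_r]‖_∞), and α̌_Δu = (1/4)(λ̌ + φ̌_r)‖W_z‖_∞ + σ̌_z(‖W_r‖_∞ + (1/4) λ̌ ‖U_r‖_∞ ‖W_f‖_∞). Suppose ‖U_r‖_∞ ( (1/4) λ̌ ‖U_f‖_∞ + σ̌_f ) < 1 − (1/4) ((λ̌ + φ̌_r)/(1 − σ̌_z)) ‖U_z‖_∞. Then there exists δ_Δ ∈ (0,1) such that for all u_a, u_b ∈ ℝ^{n_u} with ‖u_a‖_∞ ≤ 1 and ‖u_b‖_∞ ≤ 1 and all x_a, x_b ∈ ℝ^{n_x} with ‖x_a‖_∞ ≤ λ̌ and ‖x_b‖_∞ ≤ λ̌, the GRU successor states satisfy ‖x_a⁺ − x_b⁺‖_∞ ≤ (1 − δ_Δ) ‖x_a − x_b‖_∞ + α̌_Δu ‖u_a − u_b‖_∞. -/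

import Mathlib

open Real Filter

/-- The sigmoid activation function. -/
noncomputable def sigmoid (s : ℝ) : ℝ := 1 / (1 + Real.exp (-s))

/-- Induced infinity norm of a matrix (maximum absolute row sum). -/
noncomputable def matNorm {n m : ℕ} (A : Matrix (Fin n) (Fin m) ℝ) : ℝ :=
  ⨆ i, ∑ j, |A i j|

/-- Infinity norm of the horizontal concatenation `[A B c]`
(maximum absolute row sum of the concatenated matrix). -/
noncomputable def catNorm {n m p : ℕ} (A : Matrix (Fin n) (Fin m) ℝ)
    (B : Matrix (Fin n) (Fin p) ℝ) (c : Fin n → ℝ) : ℝ :=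
  ⨆ i, (∑ j, |A i j| + ∑ j, |B i j| + |c i|)

/-- One step of the single-layer GRU:
`x⁺ = z ∘ x + (1 - z) ∘ tanh(W_r u + U_r (f ∘ x) + b_r)`,
`z = σ(W_z u + U_z x + b_z)`, `f = σ(W_f u + U_f x + b_f)`. -/
noncomputable def gruStep {nu nx : ℕ}
    (Wz Wf Wr : Matrix (Fin nx) (Fin nu) ℝ)
    (Uz Uf Ur : Matrix (Fin nx) (Fin nx) ℝ)
    (bz bf br : Fin nx → ℝ)
    (u : Fin nu → ℝ) (x : Fin nx → ℝ) : Fin nx → ℝ :=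
  let z : Fin nx → ℝ := fun i => _root_.sigmoid ((Wz.mulVec u + Uz.mulVec x + bz) i)
  let f : Fin nx → ℝ := fun i => _root_.sigmoid ((Wf.mulVec u + Uf.mulVec x + bf) i)
  let r : Fin nx → ℝ := fun i => Real.tanh ((Wr.mulVec u + Ur.mulVec (f * x) + br) i)
  fun j => z j * x j + (1 - z j) * r j


/-!
Write the GRU step as `x⁺ = z ∘ x + (1 - z) ∘ r`, so that componentwise
`x_a⁺ - x_b⁺ = z_a (x_a - x_b) + (1 - z_a) (r_a - r_b) + (z_a - z_b) (x_b - r_b)`.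
On the invariant set `‖u‖_∞ ≤ 1`, `‖x‖_∞ ≤ λ̌` every pre-activation is bounded by the
corresponding `‖[W λ̌U b]‖_∞`, so `z_a ∈ [1 - σ̌_z, σ̌_z]`, `‖f‖_∞ ≤ σ̌_f` and `|r_b| ≤ φ̌_r`;
moreover `σ` is `1/4`-Lipschitz and `tanh` is `1`-Lipschitz. This gives
`|r_a - r_b| ≤ K ‖Δx‖ + (‖W_r‖ + λ̌‖U_r‖‖W_f‖/4) ‖Δu‖` with `K = ‖U_r‖ (λ̌‖U_f‖/4 + σ̌_f) ≤ 1`,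
and the convex combination in `z_a` is worst at `z_a = σ̌_z` for the state term and at
`1 - z_a = σ̌_z` for the input term. The resulting rate `σ̌_z + (1 - σ̌_z) K + (λ̌ + φ̌_r)‖U_z‖/4`
is `< 1` by the hypothesis multiplied by `1 - σ̌_z`.
-/

theorem sigmoid_eq_real_sigmoid : _root_.sigmoid = Real.sigmoid :=
  funext fun _ => one_div _

namespace Real

theorem lipschitzWith_sigmoid : LipschitzWith 4⁻¹ Real.sigmoid := by
  refine lipschitzWith_of_nnnorm_deriv_le differentiable_sigmoid fun x => ?_
  rw [← NNReal.coe_le_coe, coe_nnnorm, deriv_sigmoid, Real.norm_eq_abs, NNReal.coe_inv,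
    NNReal.coe_ofNat]
  beta_reduce
  rw [abs_of_nonneg (mul_nonneg (sigmoid_nonneg x) (sub_nonneg.2 (sigmoid_le_one x)))]
  nlinarith [sq_nonneg (Real.sigmoid x - 2⁻¹)]

theorem tanh_eq_two_mul_sigmoid_sub_one (x : ℝ) : tanh x = 2 * Real.sigmoid (2 * x) - 1 := by
  rw [tanh_eq, sigmoid_def, show -(2 * x) = -x + -x by ring, exp_add]
  have : exp x * exp (-x) = 1 := by rw [← exp_add, add_neg_cancel, exp_zero]
  field_simp
  linear_combination 2 * exp (-x) * this

theorem lipschitzWith_tanh : LipschitzWith 1 tanh := by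
  refine LipschitzWith.of_dist_le_mul fun a b => ?_
  have h := lipschitzWith_sigmoid.dist_le_mul (2 * a) (2 * b)
  simp only [Real.dist_eq, tanh_eq_two_mul_sigmoid_sub_one, NNReal.coe_inv, NNReal.coe_ofNat,
    NNReal.coe_one] at h ⊢
  calc |2 * Real.sigmoid (2 * a) - 1 - (2 * Real.sigmoid (2 * b) - 1)|
      = 2 * |Real.sigmoid (2 * a) - Real.sigmoid (2 * b)| := by rw [← abs_two, ← abs_mul]; ring_nf
    _ ≤ 2 * (4⁻¹ * |2 * a - 2 * b|) := by gcongr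
    _ = 1 * |a - b| := by rw [← mul_sub, abs_mul, abs_two]; ring

theorem tanh_monotone : Monotone tanh := fun a b hab => by
  simp only [tanh_eq_two_mul_sigmoid_sub_one]
  linarith [sigmoid_le (by linarith : 2 * a ≤ 2 * b)]

theorem tanh_nonneg {x : ℝ} (hx : 0 ≤ x) : 0 ≤ tanh x :=
  tanh_zero ▸ tanh_monotone hx

theorem abs_tanh_le_tanh {s M : ℝ} (h : |s| ≤ M) : |tanh s| ≤ tanh M := by
  rw [abs_le] at h ⊢
  exact ⟨by simpa only [tanh_neg] using tanh_monotone h.1, tanh_monotone h.2⟩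

theorem sigmoid_mem_Icc_of_abs_le {s M : ℝ} (h : |s| ≤ M) :
    Real.sigmoid s ∈ Set.Icc (1 - Real.sigmoid M) (Real.sigmoid M) := by
  rw [abs_le] at h
  exact ⟨sigmoid_neg M ▸ sigmoid_le h.1, sigmoid_le h.2⟩

end Real

open Matrix

section MatrixNorms

variable {n m p : ℕ}

theorem matNorm_nonneg (A : Matrix (Fin n) (Fin m) ℝ) : 0 ≤ matNorm A :=
  Real.iSup_nonneg fun _ => by positivity

theorem catNorm_nonneg (A : Matrix (Fin n) (Fin m) ℝ) (B : Matrix (Fin n) (Fin p) ℝ)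
    (c : Fin n → ℝ) : 0 ≤ catNorm A B c :=
  Real.iSup_nonneg fun _ => by positivity

theorem sum_abs_le_matNorm (A : Matrix (Fin n) (Fin m) ℝ) (i : Fin n) :
    ∑ j, |A i j| ≤ matNorm A :=
  le_ciSup (f := fun i => ∑ j, |A i j|) (Set.finite_range _).bddAbove i

theorem sum_abs_add_sum_abs_add_abs_le_catNorm (A : Matrix (Fin n) (Fin m) ℝ)
    (B : Matrix (Fin n) (Fin p) ℝ) (c : Fin n → ℝ) (i : Fin n) :
    ∑ j, |A i j| + ∑ j, |B i j| + |c i| ≤ catNorm A B c :=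
  le_ciSup (f := fun i => ∑ j, |A i j| + ∑ j, |B i j| + |c i|) (Set.finite_range _).bddAbove i

theorem abs_mulVec_apply_le (A : Matrix (Fin n) (Fin m) ℝ) (v : Fin m → ℝ) (i : Fin n) :
    |(A *ᵥ v) i| ≤ (∑ j, |A i j|) * ‖v‖ := by
  rw [Matrix.mulVec, dotProduct, Finset.sum_mul]
  refine (Finset.abs_sum_le_sum_abs _ _).trans (Finset.sum_le_sum fun j _ => ?_)
  rw [abs_mul]
  exact mul_le_mul_of_nonneg_left (norm_le_pi_norm v j) (abs_nonneg _)

theorem norm_mulVec_le_matNorm (A : Matrix (Fin n) (Fin m) ℝ) (v : Fin m → ℝ) :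
    ‖A *ᵥ v‖ ≤ matNorm A * ‖v‖ :=
  (pi_norm_le_iff_of_nonneg (mul_nonneg (matNorm_nonneg A) (norm_nonneg v))).2 fun i =>
    (abs_mulVec_apply_le A v i).trans
      (mul_le_mul_of_nonneg_right (sum_abs_le_matNorm A i) (norm_nonneg v))

theorem abs_affine_apply_le_catNorm (W : Matrix (Fin n) (Fin m) ℝ) (U : Matrix (Fin n) (Fin n) ℝ)
    (b : Fin n → ℝ) {lam : ℝ} {u : Fin m → ℝ} {x : Fin n → ℝ} (hu : ‖u‖ ≤ 1) (hx : ‖x‖ ≤ lam)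
    (i : Fin n) : |(W *ᵥ u + U *ᵥ x + b) i| ≤ catNorm W (lam • U) b := by
  have hlam : 0 ≤ lam := (norm_nonneg x).trans hx
  have hWu : |(W *ᵥ u) i| ≤ ∑ j, |W i j| :=
    (abs_mulVec_apply_le W u i).trans (mul_le_of_le_one_right (by positivity) hu)
  have hUx : |(U *ᵥ x) i| ≤ ∑ j, |(lam • U) i j| := by
    simp only [Matrix.smul_apply, smul_eq_mul, abs_mul, abs_of_nonneg hlam, ← Finset.mul_sum]
    exact (abs_mulVec_apply_le U x i).trans (by rw [mul_comm]; gcongr)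
  calc |(W *ᵥ u + U *ᵥ x + b) i| ≤ |(W *ᵥ u) i| + |(U *ᵥ x) i| + |b i| :=
        (abs_add_le _ _).trans (add_le_add_left (abs_add_le _ _) _)
    _ ≤ catNorm W (lam • U) b :=
        le_trans (by gcongr) (sum_abs_add_sum_abs_add_abs_le_catNorm W (lam • U) b i)

end MatrixNorms

theorem norm_mul_sub_mul_le {R : Type*} [NonUnitalSeminormedRing R] (a b c d : R) :
    ‖a * b - c * d‖ ≤ ‖a‖ * ‖b - d‖ + ‖a - c‖ * ‖d‖ := by
  rw [show a * b - c * d = a * (b - d) + (a - c) * d by noncomm_ring]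
  exact (norm_add_le _ _).trans (add_le_add (norm_mul_le _ _) (norm_mul_le _ _))

section Gates

variable {nu nx : ℕ}

def gruGate (act : ℝ → ℝ) (W : Matrix (Fin nx) (Fin nu) ℝ) (U : Matrix (Fin nx) (Fin nx) ℝ)
    (b : Fin nx → ℝ) (u : Fin nu → ℝ) (x : Fin nx → ℝ) : Fin nx → ℝ :=
  act ∘ (W *ᵥ u + U *ᵥ x + b)

variable (W : Matrix (Fin nx) (Fin nu) ℝ) (U : Matrix (Fin nx) (Fin nx) ℝ) (b : Fin nx → ℝ)

theorem norm_gruGate_sub_le {act : ℝ → ℝ} {L : NNReal} (hact : LipschitzWith L act)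
    (ua ub : Fin nu → ℝ) (xa xb : Fin nx → ℝ) :
    ‖gruGate act W U b ua xa - gruGate act W U b ub xb‖ ≤
      L * (matNorm W * ‖ua - ub‖ + matNorm U * ‖xa - xb‖) := by
  have hpre : ‖(W *ᵥ ua + U *ᵥ xa + b) - (W *ᵥ ub + U *ᵥ xb + b)‖ ≤
      matNorm W * ‖ua - ub‖ + matNorm U * ‖xa - xb‖ := by
    rw [show W *ᵥ ua + U *ᵥ xa + b - (W *ᵥ ub + U *ᵥ xb + b) = W *ᵥ (ua - ub) + U *ᵥ (xa - xb) by
      simp only [mulVec_sub]; abel]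
    exact (norm_add_le _ _).trans
      (add_le_add (norm_mulVec_le_matNorm W _) (norm_mulVec_le_matNorm U _))
  refine (pi_norm_le_iff_of_nonneg (by positivity [matNorm_nonneg W, matNorm_nonneg U])).2
    fun i => ?_
  refine (hact.dist_le_mul _ _).trans (mul_le_mul_of_nonneg_left ?_ L.2)
  exact (norm_le_pi_norm _ i).trans hpre

variable {lam : ℝ} {u : Fin nu → ℝ} {x : Fin nx → ℝ}

theorem gruGate_sigmoid_apply_mem_Icc (hu : ‖u‖ ≤ 1) (hx : ‖x‖ ≤ lam) (i : Fin nx) :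
    gruGate Real.sigmoid W U b u x i ∈
      Set.Icc (1 - Real.sigmoid (catNorm W (lam • U) b)) (Real.sigmoid (catNorm W (lam • U) b)) :=
  Real.sigmoid_mem_Icc_of_abs_le (abs_affine_apply_le_catNorm W U b hu hx i)

theorem norm_gruGate_sigmoid_le (hu : ‖u‖ ≤ 1) (hx : ‖x‖ ≤ lam) :
    ‖gruGate Real.sigmoid W U b u x‖ ≤ Real.sigmoid (catNorm W (lam • U) b) :=
  (pi_norm_le_iff_of_nonneg (Real.sigmoid_pos _).le).2 fun i => by
    have hpos : 0 < gruGate Real.sigmoid W U b u x i := Real.sigmoid_pos _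
    rw [Real.norm_eq_abs, abs_of_pos hpos]
    exact (gruGate_sigmoid_apply_mem_Icc W U b hu hx i).2

theorem abs_gruGate_tanh_apply_le (hu : ‖u‖ ≤ 1) (hx : ‖x‖ ≤ lam) (i : Fin nx) :
    |gruGate tanh W U b u x i| ≤ tanh (catNorm W (lam • U) b) :=
  Real.abs_tanh_le_tanh (abs_affine_apply_le_catNorm W U b hu hx i)

end Gates

theorem abs_convex_update_sub_le {s K X E Z B za zb xa xb ra rb : ℝ} (hs : s ≤ 1)
    (hza : za ∈ Set.Icc (1 - s) s) (hK : K ≤ 1) (hE : 0 ≤ E) (hx : |xa - xb| ≤ X)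
    (hr : |ra - rb| ≤ K * X + E) (hz : |za - zb| ≤ Z) (hb : |xb - rb| ≤ B) :
    |(za * xa + (1 - za) * ra) - (zb * xb + (1 - zb) * rb)| ≤
      (s + (1 - s) * K) * X + s * E + Z * B := by
  obtain ⟨hza₀, hza₁⟩ := hza
  have hX : 0 ≤ X := (abs_nonneg _).trans hx
  calc |(za * xa + (1 - za) * ra) - (zb * xb + (1 - zb) * rb)|
      = |za * (xa - xb) + (1 - za) * (ra - rb) + (za - zb) * (xb - rb)| := by congr 1; ring
    _ ≤ za * X + (1 - za) * (K * X + E) + Z * B := by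
      refine (abs_add_le _ _).trans (add_le_add ((abs_add_le _ _).trans (add_le_add ?_ ?_)) ?_)
      · rw [abs_mul, abs_of_nonneg (by linarith)]; gcongr; linarith
      · rw [abs_mul, abs_of_nonneg (by linarith)]; gcongr; linarith
      · rw [abs_mul]; exact mul_le_mul hz hb (abs_nonneg _) ((abs_nonneg _).trans hz)
    _ ≤ (s + (1 - s) * K) * X + s * E + Z * B := by
      nlinarith [mul_nonneg (mul_nonneg (sub_nonneg.2 hza₁) (sub_nonneg.2 hK)) hX]

section GRU

variable {nu nx : ℕ} (Wz Wf Wr : Matrix (Fin nx) (Fin nu) ℝ) (Uz Uf Ur : Matrix (Fin nx) (Fin nx) ℝ)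
  (bz bf br : Fin nx → ℝ)

theorem gruStep_eq (u : Fin nu → ℝ) (x : Fin nx → ℝ) :
    gruStep Wz Wf Wr Uz Uf Ur bz bf br u x =
      gruGate Real.sigmoid Wz Uz bz u x * x +
        (1 - gruGate Real.sigmoid Wz Uz bz u x) *
          gruGate tanh Wr Ur br u (gruGate Real.sigmoid Wf Uf bf u x * x) := by
  simp only [gruStep, sigmoid_eq_real_sigmoid]
  rfl

theorem norm_gruCandidate_sub_le {lam σf : ℝ} (hσf : Real.sigmoid (catNorm Wf (lam • Uf) bf) ≤ σf)
    {ua ub : Fin nu → ℝ} {xa xb : Fin nx → ℝ} (hua : ‖ua‖ ≤ 1) (hxa : ‖xa‖ ≤ lam)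
    (hxb : ‖xb‖ ≤ lam) :
    ‖gruGate tanh Wr Ur br ua (gruGate Real.sigmoid Wf Uf bf ua xa * xa) -
        gruGate tanh Wr Ur br ub (gruGate Real.sigmoid Wf Uf bf ub xb * xb)‖ ≤
      matNorm Ur * ((1 / 4) * lam * matNorm Uf + σf) * ‖xa - xb‖ +
        (matNorm Wr + (1 / 4) * lam * matNorm Ur * matNorm Wf) * ‖ua - ub‖ := by
  set fa := gruGate Real.sigmoid Wf Uf bf ua xa
  set fb := gruGate Real.sigmoid Wf Uf bf ub xb
  have hf : ‖fa - fb‖ ≤ (1 / 4) * (matNorm Wf * ‖ua - ub‖ + matNorm Uf * ‖xa - xb‖) := by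
    simpa using norm_gruGate_sub_le Wf Uf bf Real.lipschitzWith_sigmoid ua ub xa xb
  have hfx : ‖fa * xa - fb * xb‖ ≤
      σf * ‖xa - xb‖ + (1 / 4) * (matNorm Wf * ‖ua - ub‖ + matNorm Uf * ‖xa - xb‖) * lam :=
    (norm_mul_sub_mul_le _ _ _ _).trans (add_le_add
      (by gcongr; exact (norm_gruGate_sigmoid_le Wf Uf bf hua hxa).trans hσf)
      (mul_le_mul hf hxb (norm_nonneg _) ((norm_nonneg _).trans hf)))
  refine (norm_gruGate_sub_le Wr Ur br Real.lipschitzWith_tanh _ _ _ _).trans ?_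
  rw [NNReal.coe_one, one_mul]
  nlinarith [mul_le_mul_of_nonneg_left hfx (matNorm_nonneg Ur)]

theorem norm_gruStep_sub_le {lam σz σf φr : ℝ}
    (hσz : Real.sigmoid (catNorm Wz (lam • Uz) bz) ≤ σz) (hσz₁ : σz ≤ 1)
    (hσf : Real.sigmoid (catNorm Wf (lam • Uf) bf) ≤ σf)
    (hφr : tanh (catNorm Wr (lam • Ur) br) ≤ φr)
    (hK : matNorm Ur * ((1 / 4) * lam * matNorm Uf + σf) ≤ 1)
    {ua ub : Fin nu → ℝ} {xa xb : Fin nx → ℝ}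
    (hua : ‖ua‖ ≤ 1) (hub : ‖ub‖ ≤ 1) (hxa : ‖xa‖ ≤ lam) (hxb : ‖xb‖ ≤ lam) :
    ‖gruStep Wz Wf Wr Uz Uf Ur bz bf br ua xa - gruStep Wz Wf Wr Uz Uf Ur bz bf br ub xb‖ ≤
      (σz + (1 - σz) * (matNorm Ur * ((1 / 4) * lam * matNorm Uf + σf)) +
          (1 / 4) * (lam + φr) * matNorm Uz) * ‖xa - xb‖ +
        ((1 / 4) * (lam + φr) * matNorm Wz +
          σz * (matNorm Wr + (1 / 4) * lam * matNorm Ur * matNorm Wf)) * ‖ua - ub‖ := by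
  have hlam : 0 ≤ lam := (norm_nonneg xa).trans hxa
  have hσz₀ : 0 < σz := (Real.sigmoid_pos _).trans_le hσz
  have hσf₀ : 0 < σf := (Real.sigmoid_pos _).trans_le hσf
  have hφr₀ : 0 ≤ φr := (Real.tanh_nonneg (catNorm_nonneg _ _ _)).trans hφr
  have := matNorm_nonneg Wz; have := matNorm_nonneg Wf; have := matNorm_nonneg Wr
  have := matNorm_nonneg Uz; have := matNorm_nonneg Uf; have := matNorm_nonneg Ur
  set za := gruGate Real.sigmoid Wz Uz bz ua xa
  set zb := gruGate Real.sigmoid Wz Uz bz ub xb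
  have hz : ‖za - zb‖ ≤ (1 / 4) * (matNorm Wz * ‖ua - ub‖ + matNorm Uz * ‖xa - xb‖) := by
    simpa using norm_gruGate_sub_le Wz Uz bz Real.lipschitzWith_sigmoid ua ub xa xb
  have hr := norm_gruCandidate_sub_le Wf Wr Uf Ur bf br hσf (ub := ub) hua hxa hxb
  have hfbxb : ‖gruGate Real.sigmoid Wf Uf bf ub xb * xb‖ ≤ lam :=
    (norm_mul_le _ _).trans <| (mul_le_of_le_one_left (norm_nonneg _)
      ((norm_gruGate_sigmoid_le Wf Uf bf hub hxb).trans (Real.sigmoid_le_one _))).trans hxb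
  rw [gruStep_eq, gruStep_eq]
  refine (pi_norm_le_iff_of_nonneg (by positivity)).2 fun i => ?_
  have hzi := gruGate_sigmoid_apply_mem_Icc Wz Uz bz hua hxa i
  refine (abs_convex_update_sub_le (X := ‖xa - xb‖)
    (E := (matNorm Wr + (1 / 4) * lam * matNorm Ur * matNorm Wf) * ‖ua - ub‖)
    (Z := (1 / 4) * (matNorm Wz * ‖ua - ub‖ + matNorm Uz * ‖xa - xb‖)) (B := lam + φr) hσz₁
    ⟨by linarith [hzi.1], hzi.2.trans hσz⟩ hK (by positivity) ?_ ((norm_le_pi_norm _ i).trans hr)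
    ((norm_le_pi_norm _ i).trans hz) ?_).trans_eq (by ring)
  · simpa using norm_le_pi_norm (xa - xb) i
  · refine (abs_sub _ _).trans (add_le_add ((norm_le_pi_norm xb i).trans hxb) ?_)
    exact (abs_gruGate_tanh_apply_le Wr Ur br hub hfbxb i).trans hφr

end GRU

/-- **One-step incremental contraction (intermediate claim in the proof of Theorem 2).**
With `σ̌_z = σ(‖[W_z λ̌U_z b_z]‖_∞)`, `σ̌_f = σ(‖[W_f λ̌U_f b_f]‖_∞)`,
`φ̌_r = tanh(‖[W_r λ̌U_r b_r]‖_∞)` and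
`α̌_Δu = (1/4)(λ̌ + φ̌_r)‖W_z‖_∞ + σ̌_z(‖W_r‖_∞ + (1/4) λ̌ ‖U_r‖_∞ ‖W_f‖_∞)`, if
`‖U_r‖_∞ ((1/4) λ̌ ‖U_f‖_∞ + σ̌_f) < 1 - (1/4) ((λ̌ + φ̌_r)/(1 - σ̌_z)) ‖U_z‖_∞`
then there exists `δ_Δ ∈ (0,1)` such that for all unity-bounded inputs and states
bounded by `λ̌`, the successor states satisfy
`‖x_a⁺ - x_b⁺‖_∞ ≤ (1 - δ_Δ) ‖x_a - x_b‖_∞ + α̌_Δu ‖u_a - u_b‖_∞`. -/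
theorem gru_one_step_incremental_contraction {nu nx : ℕ}
    (Wz Wf Wr : Matrix (Fin nx) (Fin nu) ℝ)
    (Uz Uf Ur : Matrix (Fin nx) (Fin nx) ℝ)
    (bz bf br : Fin nx → ℝ)
    (lam : ℝ) (hlam : 1 ≤ lam)
    (hcond : matNorm Ur * ((1 / 4) * lam * matNorm Uf + _root_.sigmoid (catNorm Wf (lam • Uf) bf)) <
      1 - (1 / 4) * ((lam + Real.tanh (catNorm Wr (lam • Ur) br)) /
        (1 - _root_.sigmoid (catNorm Wz (lam • Uz) bz))) * matNorm Uz) :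
    ∃ δ : ℝ, 0 < δ ∧ δ < 1 ∧
      ∀ ua ub : Fin nu → ℝ, ‖ua‖ ≤ 1 → ‖ub‖ ≤ 1 →
        ∀ xa xb : Fin nx → ℝ, ‖xa‖ ≤ lam → ‖xb‖ ≤ lam →
          ‖gruStep Wz Wf Wr Uz Uf Ur bz bf br ua xa -
              gruStep Wz Wf Wr Uz Uf Ur bz bf br ub xb‖ ≤
            (1 - δ) * ‖xa - xb‖ +
              ((1 / 4) * (lam + Real.tanh (catNorm Wr (lam • Ur) br)) * matNorm Wz +
                _root_.sigmoid (catNorm Wz (lam • Uz) bz) *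
                  (matNorm Wr + (1 / 4) * lam * matNorm Ur * matNorm Wf)) *
                ‖ua - ub‖ := by
  simp only [sigmoid_eq_real_sigmoid] at hcond ⊢
  set σz := Real.sigmoid (catNorm Wz (lam • Uz) bz)
  set K := matNorm Ur * ((1 / 4) * lam * matNorm Uf + Real.sigmoid (catNorm Wf (lam • Uf) bf))
  set q := (1 / 4) * (lam + tanh (catNorm Wr (lam • Ur) br)) * matNorm Uz
  have hσz₀ : 0 < σz := Real.sigmoid_pos _
  have hσz₁ : 0 < 1 - σz := sub_pos.2 (Real.sigmoid_lt_one _)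
  have hq : 0 ≤ q := mul_nonneg (mul_nonneg (by norm_num)
    (by linarith [Real.tanh_nonneg (catNorm_nonneg Wr (lam • Ur) br)])) (matNorm_nonneg Uz)
  have hK : 0 ≤ K := mul_nonneg (matNorm_nonneg Ur) (by
    have := matNorm_nonneg Uf; have := Real.sigmoid_pos (catNorm Wf (lam • Uf) bf); positivity)
  have hK₁ : K < 1 - q / (1 - σz) := by convert hcond using 2; ring
  have hrate : (1 - σz) * K < 1 - σz - q := by
    have := mul_lt_mul_of_pos_left hK₁ hσz₁
    rwa [mul_sub, mul_one, mul_div_cancel₀ _ hσz₁.ne'] at this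
  refine ⟨1 - (σz + (1 - σz) * K + q), by linarith, by nlinarith,
    fun ua ub hua hub xa xb hxa hxb => ?_⟩
  rw [sub_sub_cancel]
  exact norm_gruStep_sub_le Wz Wf Wr Uz Uf Ur bz bf br le_rfl (Real.sigmoid_lt_one _).le le_rfl
    le_rfl (hK₁.le.trans (sub_le_self _ (div_nonneg hq hσz₁.le))) hua hub hxa hxb
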